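/- arXiv:1402.2266 — 5 statements merged into one kernel-verified Lean document; each statement's English description precedes it below -/
import Mathlib

section
/- For every n ≥ 3, F_{⌈n/2⌉}² < F_n < F_{⌈n/2⌉+1}². -/
theorem fib_sq_bounds (n : ℕ) (hn : 3 ≤ n) :
    Nat.fib ((n + 1) / 2) ^ 2 < Nat.fib n ∧
    Nat.fib n < Nat.fib ((n + 1) / 2 + 1) ^ 2 := by
  rcases Nat.even_or_odd n with ⟨k, hk⟩ | ⟨k, hk⟩
  · -- n = 2k, k ≥ 2; write k = m + 2
    obtain ⟨m, rfl⟩ : ∃ m, k = m + 2 := ⟨k - 2, by omega⟩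
    subst hk
    have hidx : ((m + 2) + (m + 2) + 1) / 2 = m + 2 := by omega
    have hfib : Nat.fib ((m + 2) + (m + 2)) =
        Nat.fib (m + 1) * Nat.fib (m + 2) + Nat.fib (m + 2) * Nat.fib (m + 3) := by
      have := Nat.fib_add (m + 1) (m + 2)
      convert this using 2 <;> omega
    rw [hidx, hfib]
    have h1 : Nat.fib (m + 3) = Nat.fib (m + 2) + Nat.fib (m + 1) := by
      rw [Nat.fib_add_two]; ring
    have h2 : 1 ≤ Nat.fib (m + 1) := Nat.fib_pos.2 (by omega)
    have h3 : 1 ≤ Nat.fib (m + 2) := Nat.fib_pos.2 (by omega)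
    constructor <;> nlinarith
  · -- n = 2k + 1, k ≥ 1; write k = m + 1
    obtain ⟨m, rfl⟩ : ∃ m, k = m + 1 := ⟨k - 1, by omega⟩
    subst hk
    have hidx : (2 * (m + 1) + 1 + 1) / 2 = m + 2 := by omega
    have hfib : Nat.fib (2 * (m + 1) + 1) =
        Nat.fib (m + 2) ^ 2 + Nat.fib (m + 1) ^ 2 := Nat.fib_two_mul_add_one (m + 1)
    rw [hidx, hfib]
    have h1 : Nat.fib (m + 3) = Nat.fib (m + 2) + Nat.fib (m + 1) := by
      rw [Nat.fib_add_two]; ring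
    have h2 : 1 ≤ Nat.fib (m + 1) := Nat.fib_pos.2 (by omega)
    have h3 : 1 ≤ Nat.fib (m + 2) := Nat.fib_pos.2 (by omega)
    constructor <;> nlinarith
end

section
/- Let k ≥ 9 be a perfect square and let x be an integer with 1 < x < √k and gcd(x, k) = 1. Then the modular inverse y of x modulo k (with 1 ≤ y ≤ k) satisfies √k < y < k - √k. -/
theorem inverse_bounds (k m x y : ℕ) (hk : 9 ≤ k) (hsq : k = m ^ 2)
    (hx1 : 1 < x) (hx2 : (x : ℝ) < Real.sqrt k) (hgcd : Nat.gcd x k = 1)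
    (hy1 : 1 ≤ y) (hy2 : y ≤ k) (hinv : x * y ≡ 1 [MOD k]) :
    Real.sqrt k < (y : ℝ) ∧ (y : ℝ) < (k : ℝ) - Real.sqrt k := by
  have hm3 : 3 ≤ m := by nlinarith [hsq ▸ hk]
  have hsqrt : Real.sqrt k = m := by
    rw [hsq]; push_cast; exact Real.sqrt_sq (by positivity)
  have hk1 : 1 < k := by omega
  have hxm : x < m := by
    have h := hx2; rw [hsqrt] at h; exact_mod_cast h
  have hyl : m < y := by
    by_contra h
    push_neg at h
    have hxy : x * y < k := by nlinarith
    have h2 := hinv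
    unfold Nat.ModEq at h2
    rw [Nat.mod_eq_of_lt hxy, Nat.mod_eq_of_lt hk1] at h2
    nlinarith
  have hyu : y + m < k := by
    by_contra h
    push_neg at h
    have hz : k - y ≤ m := by omega
    have e : x * (k - y) + x * y = x * k := by
      rw [← Nat.mul_add]; congr 1; omega
    have h2 : x * (k - y) + 1 ≡ 0 [MOD k] := by
      calc x * (k - y) + 1 ≡ x * (k - y) + x * y [MOD k] :=
            Nat.ModEq.add_left _ hinv.symm
        _ = x * k := e
        _ ≡ 0 [MOD k] := Nat.modEq_zero_iff_dvd.mpr ⟨x, mul_comm x k⟩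
    have hdvd : k ∣ x * (k - y) + 1 := Nat.modEq_zero_iff_dvd.mp h2
    have hle := Nat.le_of_dvd (by positivity) hdvd
    have hb : x * (k - y) ≤ x * m := Nat.mul_le_mul_left _ hz
    nlinarith
  constructor
  · rw [hsqrt]; exact_mod_cast hyl
  · rw [hsqrt]
    have : (y : ℝ) + m < k := by exact_mod_cast hyu
    linarith
end

section
/- Let k ≥ 9 be a perfect square. Define E_k = {x ∈ ℕ : 1 ≤ x ≤ k, gcd(x,k) = 1}, U_k = {x ∈ E_k : x < √k or x > k - √k}, and let λ : E_k → E_k be λ(x) = 1/x mod k. Then U_k ∩ λ(U_k) = {1, k-1}. -/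
set_option maxHeartbeats 1000000

lemma keylem (m x y : ℕ) (hm : 3 ≤ m)
    (hx1 : 1 ≤ x) (hxk : x < m ^ 2) (hy1 : 1 ≤ y) (hyk : y < m ^ 2)
    (hdvd : ((m : ℤ) ^ 2) ∣ (x : ℤ) * (y : ℤ) - 1)
    (hxU : x < m ∨ m ^ 2 - m < x) (hyU : y < m ∨ m ^ 2 - m < y) :
    x = 1 ∨ x = m ^ 2 - 1 := by
  have hmk : m ≤ m ^ 2 := by nlinarith
  have hXK : (x : ℤ) < (m : ℤ) ^ 2 := by exact_mod_cast hxk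
  have hYK : (y : ℤ) < (m : ℤ) ^ 2 := by exact_mod_cast hyk
  have hX1 : (1 : ℤ) ≤ (x : ℤ) := by exact_mod_cast hx1
  have hY1 : (1 : ℤ) ≤ (y : ℤ) := by exact_mod_cast hy1
  have hM : (3 : ℤ) ≤ (m : ℤ) := by exact_mod_cast hm
  set K : ℤ := (m : ℤ) ^ 2 with hK
  rcases hxU with h1 | h2 <;> rcases hyU with h3 | h4
  · -- both small
    have hXm : (x : ℤ) < (m : ℤ) := by exact_mod_cast h1
    have hYm : (y : ℤ) < (m : ℤ) := by exact_mod_cast h3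
    have h0 : (x : ℤ) * y - 1 = 0 := by
      apply Int.eq_zero_of_abs_lt_dvd hdvd
      rw [abs_of_nonneg (by nlinarith [mul_le_mul hX1 hY1 zero_le_one (by linarith : (0:ℤ) ≤ (x:ℤ))])]
      nlinarith [mul_le_mul (by linarith : (x:ℤ) ≤ (m:ℤ) - 1) (by linarith : (y:ℤ) ≤ (m:ℤ) - 1)
          (by linarith) (by linarith)]
    have hxle : (x : ℤ) ≤ 1 := by
      by_contra h
      push_neg at h
      nlinarith [mul_le_mul (by linarith : (2:ℤ) ≤ (x:ℤ)) hY1 zero_le_one (by linarith)]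
    left
    have : (x : ℤ) = 1 := le_antisymm hxle hX1
    exact_mod_cast this
  · -- x small, y large : contradiction
    exfalso
    have hXm : (x : ℤ) < (m : ℤ) := by exact_mod_cast h1
    have hYm : K - (m : ℤ) < y := by
      have h' : (m ^ 2 - m : ℕ) < y := h4
      have := Nat.cast_lt (α := ℤ).2 h'
      rw [Nat.cast_sub hmk] at this
      simpa [hK] using this
    have hd2 : K ∣ (x : ℤ) * (K - y) + 1 := by
      have heq : (x : ℤ) * (K - y) + 1 = (x : ℤ) * K - ((x : ℤ) * y - 1) := by ring
      rw [heq]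
      exact dvd_sub (dvd_mul_left K (x : ℤ)) hdvd
    have hpos : 0 < (x : ℤ) * (K - y) + 1 := by nlinarith
    have hlt : (x : ℤ) * (K - y) + 1 < K := by
      nlinarith [mul_le_mul (by linarith : (x:ℤ) ≤ (m:ℤ) - 1)
        (by linarith : K - (y:ℤ) ≤ (m:ℤ) - 1) (by linarith) (by linarith)]
    have := Int.le_of_dvd hpos hd2
    linarith
  · -- x large, y small : contradiction
    exfalso
    have hYm : (y : ℤ) < (m : ℤ) := by exact_mod_cast h3
    have hXm : K - (m : ℤ) < x := by
      have h' : (m ^ 2 - m : ℕ) < x := h2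
      have := Nat.cast_lt (α := ℤ).2 h'
      rw [Nat.cast_sub hmk] at this
      simpa [hK] using this
    have hd2 : K ∣ (y : ℤ) * (K - x) + 1 := by
      have heq : (y : ℤ) * (K - x) + 1 = (y : ℤ) * K - ((x : ℤ) * y - 1) := by ring
      rw [heq]
      exact dvd_sub (dvd_mul_left K (y : ℤ)) hdvd
    have hpos : 0 < (y : ℤ) * (K - x) + 1 := by nlinarith
    have hlt : (y : ℤ) * (K - x) + 1 < K := by
      nlinarith [mul_le_mul (by linarith : (y:ℤ) ≤ (m:ℤ) - 1)
        (by linarith : K - (x:ℤ) ≤ (m:ℤ) - 1) (by linarith) (by linarith)]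
    have := Int.le_of_dvd hpos hd2
    linarith
  · -- both large
    have hXm : K - (m : ℤ) < x := by
      have h' : (m ^ 2 - m : ℕ) < x := h2
      have := Nat.cast_lt (α := ℤ).2 h'
      rw [Nat.cast_sub hmk] at this
      simpa [hK] using this
    have hYm : K - (m : ℤ) < y := by
      have h' : (m ^ 2 - m : ℕ) < y := h4
      have := Nat.cast_lt (α := ℤ).2 h'
      rw [Nat.cast_sub hmk] at this
      simpa [hK] using this
    have hx1' : (1 : ℤ) ≤ K - x := by linarith
    have hy1' : (1 : ℤ) ≤ K - y := by linarith
    have hd2 : K ∣ (K - x) * (K - y) - 1 := by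
      have heq : (K - x) * (K - y) - 1 = K * (K - x - y) + ((x : ℤ) * y - 1) := by ring
      rw [heq]
      exact dvd_add (dvd_mul_right K _) hdvd
    have hub : (K - x) * (K - y) ≤ ((m:ℤ) - 1) * ((m:ℤ) - 1) :=
      mul_le_mul (by linarith) (by linarith) (by linarith) (by linarith)
    have hexp : ((m:ℤ) - 1) * ((m:ℤ) - 1) = K - 2 * m + 1 := by rw [hK]; ring
    have hlb : (1:ℤ) * 1 ≤ (K - x) * (K - y) :=
      mul_le_mul hx1' hy1' zero_le_one (by linarith)
    have h0 : (K - x) * (K - y) - 1 = 0 := by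
      apply Int.eq_zero_of_abs_lt_dvd hd2
      rw [abs_of_nonneg (by linarith)]
      linarith
    have hxle : K - (x : ℤ) ≤ 1 := by
      by_contra h
      push_neg at h
      nlinarith [mul_le_mul (by linarith : (2:ℤ) ≤ K - (x:ℤ)) hy1' zero_le_one (by linarith)]
    have hxeq : (x : ℤ) = K - 1 := by linarith
    right
    have : (x : ℤ) = ((m ^ 2 - 1 : ℕ) : ℤ) := by
      rw [Nat.cast_sub (by nlinarith : 1 ≤ m ^ 2)]
      push_cast
      rw [hxeq, hK]
    exact_mod_cast this

theorem U_inter_lam_image (k m : ℕ) (hk : 9 ≤ k) (hsq : k = m ^ 2)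
    (lam : ℕ → ℕ)
    (hlam : ∀ x, 1 ≤ x → x ≤ k → Nat.gcd x k = 1 →
      1 ≤ lam x ∧ lam x ≤ k ∧ x * lam x ≡ 1 [MOD k]) :
    let E : Set ℕ := {x | 1 ≤ x ∧ x ≤ k ∧ Nat.gcd x k = 1}
    let U : Set ℕ := {x ∈ E | (x : ℝ) < Real.sqrt k ∨ (k : ℝ) - Real.sqrt k < (x : ℝ)}
    U ∩ (lam '' U) = {1, k - 1} := by
  intro E U
  have hm : 3 ≤ m := by nlinarith [hsq ▸ hk]
  have hmk : m ≤ k := by rw [hsq]; nlinarith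
  have hk1 : 1 ≤ k := by omega
  have hsqrt : Real.sqrt k = m := by
    rw [hsq]
    push_cast
    rw [Real.sqrt_sq (by positivity)]
  have hUiff : ∀ x : ℕ, x ∈ U ↔ (1 ≤ x ∧ x ≤ k ∧ Nat.gcd x k = 1) ∧ (x < m ∨ k - m < x) := by
    intro x
    show (x ∈ E ∧ _) ↔ _
    rw [hsqrt]
    constructor
    · rintro ⟨hE, h2⟩
      refine ⟨hE, ?_⟩
      rcases h2 with h | h
      · left; exact_mod_cast h
      · right
        have : ((k - m : ℕ) : ℝ) < x := by rw [Nat.cast_sub hmk]; linarith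
        exact_mod_cast this
    · rintro ⟨hE, h2⟩
      refine ⟨hE, ?_⟩
      rcases h2 with h | h
      · left; exact_mod_cast h
      · right
        have : ((k - m : ℕ) : ℝ) < (x : ℝ) := by exact_mod_cast h
        rw [Nat.cast_sub hmk] at this
        linarith
  -- lam 1 = 1
  have hlam1 : lam 1 = 1 := by
    obtain ⟨h1, h2, h3⟩ := hlam 1 le_rfl hk1 (Nat.gcd_one_left k)
    rw [one_mul] at h3
    have hdvd : (k : ℤ) ∣ (1 : ℤ) - (lam 1 : ℤ) := by
      have := (Nat.modEq_iff_dvd).1 h3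
      exact_mod_cast this
    have hL1 : (1 : ℤ) ≤ (lam 1 : ℤ) := by exact_mod_cast h1
    have hLk : (lam 1 : ℤ) ≤ (k : ℤ) := by exact_mod_cast h2
    have hk9 : (9 : ℤ) ≤ (k : ℤ) := by exact_mod_cast hk
    have := Int.eq_zero_of_abs_lt_dvd hdvd (by rw [abs_lt]; omega)
    omega
  -- lam (k-1) = k-1
  have hgcdk1 : Nat.gcd (k - 1) k = 1 := by
    rw [Nat.gcd_self_sub_left hk1, Nat.gcd_one_left]
  have hlamk1 : lam (k - 1) = k - 1 := by
    obtain ⟨h1, h2, h3⟩ := hlam (k - 1) (by omega) (by omega) hgcdk1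
    have hdvd : (k : ℤ) ∣ (1 : ℤ) - ((k : ℤ) - 1) * (lam (k - 1) : ℤ) := by
      have h' := (Nat.modEq_iff_dvd).1 h3
      rw [Nat.cast_mul, Nat.cast_sub hk1, Nat.cast_one] at h'
      exact h'
    have hd2 : (k : ℤ) ∣ (lam (k - 1) : ℤ) + 1 - k := by
      have heq : (lam (k - 1) : ℤ) + 1 - k =
          ((1 : ℤ) - ((k : ℤ) - 1) * (lam (k - 1) : ℤ)) + k * ((lam (k-1) : ℤ) - 1) := by ring
      rw [heq]
      exact dvd_add hdvd (dvd_mul_right _ _)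
    have hL1 : (1 : ℤ) ≤ (lam (k-1) : ℤ) := by exact_mod_cast h1
    have hLk : (lam (k-1) : ℤ) ≤ (k : ℤ) := by exact_mod_cast h2
    have hk9 : (9 : ℤ) ≤ (k : ℤ) := by exact_mod_cast hk
    have := Int.eq_zero_of_abs_lt_dvd hd2 (by rw [abs_lt]; omega)
    omega
  ext x
  simp only [Set.mem_inter_iff, Set.mem_image, Set.mem_insert_iff, Set.mem_singleton_iff]
  constructor
  · rintro ⟨hxU, u, huU, hux⟩
    obtain ⟨⟨hx1, hxk, hgx⟩, hxC⟩ := (hUiff x).1 hxU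
    obtain ⟨⟨hu1, huk, hgu⟩, huC⟩ := (hUiff u).1 huU
    obtain ⟨hl1, hlk, hmod⟩ := hlam u hu1 huk hgu
    have hxlt : x < k := by
      rcases Nat.lt_or_ge x k with h | h
      · exact h
      · exfalso; have hxe : x = k := le_antisymm hxk h
        rw [hxe, Nat.gcd_self] at hgx; omega
    have hult : u < k := by
      rcases Nat.lt_or_ge u k with h | h
      · exact h
      · exfalso; have hue : u = k := le_antisymm huk h
        rw [hue, Nat.gcd_self] at hgu; omega
    have hdvd : ((m : ℤ) ^ 2) ∣ (x : ℤ) * (u : ℤ) - 1 := by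
      have h' := (Nat.modEq_iff_dvd).1 hmod
      rw [hsq] at h'
      push_cast at h'
      have h2 : ((m : ℤ) ^ 2) ∣ -((u : ℤ) * (lam u : ℤ) - 1) := by
        rw [neg_sub]; exact_mod_cast h'
      rw [dvd_neg] at h2
      rw [← hux]
      have heq : (lam u : ℤ) * u - 1 = (u : ℤ) * (lam u : ℤ) - 1 := by ring
      rw [heq]
      exact h2
    have := keylem m x u hm hx1 (hsq ▸ hxlt) hu1 (hsq ▸ hult) hdvd
      (by rw [hsq] at hxC; exact hxC) (by rw [hsq] at huC; exact huC)
    rcases this with h | h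
    · left; exact h
    · right; rw [hsq]; exact h
  · rintro (rfl | rfl)
    · have h1U : (1 : ℕ) ∈ U := (hUiff 1).2 ⟨⟨le_rfl, hk1, Nat.gcd_one_left k⟩, Or.inl (by omega)⟩
      exact ⟨h1U, 1, h1U, hlam1⟩
    · have hU : (k - 1 : ℕ) ∈ U :=
        (hUiff (k-1)).2 ⟨⟨by omega, by omega, hgcdk1⟩, Or.inr (by omega)⟩
      exact ⟨hU, k - 1, hU, hlamk1⟩
end

section
/- Let k ≥ 9 be a perfect square. With E_k = {x ∈ ℕ : 1 ≤ x ≤ k, gcd(x,k) = 1}, U_k = {x ∈ E_k : x < √k or x > k - √k}, and λ(x) = 1/x mod k, the cardinality of U_k ∪ λ(U_k) equals 4·φ(√k) − 2, where φ is Euler's totient function. -/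
private lemma cux_rep_unique {k a b : ℕ} (ha1 : 1 ≤ a) (hak : a ≤ k) (hb1 : 1 ≤ b)
    (hbk : b ≤ k) (h : a ≡ b [MOD k]) : a = b := by
  rcases le_total a b with h' | h'
  · obtain ⟨t, ht⟩ := (Nat.modEq_iff_dvd' h').mp h
    rcases Nat.eq_zero_or_pos t with rfl | hpos
    · omega
    · have : k ≤ k * t := Nat.le_mul_of_pos_right k hpos
      omega
  · obtain ⟨t, ht⟩ := (Nat.modEq_iff_dvd' h').mp h.symm
    rcases Nat.eq_zero_or_pos t with rfl | hpos
    · omega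
    · have : k ≤ k * t := Nat.le_mul_of_pos_right k hpos
      omega

private lemma cux_inv_unique {k a b c : ℕ} (h1 : a * b ≡ 1 [MOD k]) (h2 : a * c ≡ 1 [MOD k]) :
    b ≡ c [MOD k] := by
  have hb : b * (a * c) ≡ b * 1 [MOD k] := h2.mul_left b
  have hc : c * (a * b) ≡ c * 1 [MOD k] := h1.mul_left c
  have hb' : b ≡ b * (a * c) [MOD k] := by simpa using (h2.mul_left b).symm
  have hc' : c * (a * b) ≡ c [MOD k] := by simpa using h1.mul_left c
  have heq : b * (a * c) = c * (a * b) := by ring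
  rw [heq] at hb'
  exact hb'.trans hc' 

private lemma cux_case_small {m x y : ℕ} (hm : 3 ≤ m) (hx : x < m) (hy : y < m)
    (h : x * y ≡ 1 [MOD m ^ 2]) : x = 1 ∧ y = 1 := by
  have hlt : x * y < m ^ 2 := by
    have := Nat.mul_le_mul (show x ≤ m - 1 by omega) (show y ≤ m - 1 by omega)
    have h2 : (m - 1) * (m - 1) < m ^ 2 := by
      obtain ⟨n, rfl⟩ : ∃ n, m = n + 3 := ⟨m - 3, by omega⟩
      show (n + 2) * (n + 2) < (n + 3) ^ 2
      nlinarith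
    omega
  have h1 : 1 < m ^ 2 := by nlinarith
  have heq : x * y % m ^ 2 = 1 % m ^ 2 := h
  rw [Nat.mod_eq_of_lt hlt, Nat.mod_eq_of_lt h1] at heq
  exact ⟨Nat.eq_one_of_dvd_one ⟨y, heq.symm⟩, Nat.eq_one_of_dvd_one ⟨x, by rw [← heq]; ring⟩⟩

private lemma cux_case_mixed {m x y : ℕ} (hm : 3 ≤ m) (hx1 : 1 ≤ x) (hx : x < m)
    (hy : m ^ 2 - m < y) (hyk : y ≤ m ^ 2) (h : x * y ≡ 1 [MOD m ^ 2]) : False := by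
  have hkm : m ≤ m ^ 2 := by nlinarith
  have hd : ((m : ℤ) ^ 2) ∣ (1 : ℤ) - x * y := by
    have := (Nat.modEq_iff_dvd).mp h
    push_cast at this ⊢
    convert this using 1 <;> push_cast <;> ring
  have hd4 : m ^ 2 ∣ x * (m ^ 2 - y) + 1 := by
    rw [← Int.natCast_dvd_natCast]
    push_cast [Nat.cast_sub hyk]
    have heq : ((x : ℤ) * ((m : ℤ) ^ 2 - y) + 1) = ((1 : ℤ) - x * y) + (m : ℤ) ^ 2 * x := by ring
    rw [heq]
    exact dvd_add hd ⟨x, rfl⟩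
  have hle : m ^ 2 ≤ x * (m ^ 2 - y) + 1 := Nat.le_of_dvd (by omega) hd4
  have hb : x * (m ^ 2 - y) ≤ (m - 1) * (m - 1) :=
    Nat.mul_le_mul (by omega) (by omega)
  have h3 : (m - 1) * (m - 1) + 1 < m ^ 2 := by
    obtain ⟨n, rfl⟩ : ∃ n, m = n + 3 := ⟨m - 3, by omega⟩
    show (n + 2) * (n + 2) + 1 < (n + 3) ^ 2
    nlinarith
  omega

private lemma cux_case_large {m x y : ℕ} (hm : 3 ≤ m) (hx : m ^ 2 - m < x) (hxk : x ≤ m ^ 2)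
    (hy : m ^ 2 - m < y) (hyk : y ≤ m ^ 2) (h : x * y ≡ 1 [MOD m ^ 2]) :
    x = m ^ 2 - 1 ∧ y = m ^ 2 - 1 := by
  have hkm : m ≤ m ^ 2 := by nlinarith
  have hzw : (m ^ 2 - x) * (m ^ 2 - y) ≡ 1 [MOD m ^ 2] := by
    rw [Nat.modEq_iff_dvd] at h ⊢
    push_cast [Nat.cast_sub hxk, Nat.cast_sub hyk] at h ⊢
    have heq : ((1 : ℤ) - ((m:ℤ)^2 - x) * ((m:ℤ)^2 - y)) =
        ((1 : ℤ) - x * y) + (m:ℤ)^2 * (x + y - (m:ℤ)^2) := by ring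
    rw [heq]
    exact dvd_add h ⟨_, rfl⟩
  have := cux_case_small hm (show m ^ 2 - x < m by omega) (show m ^ 2 - y < m by omega) hzw
  omega

theorem card_U_union_lam_image (k m : ℕ) (hk : 9 ≤ k) (hsq : k = m ^ 2)
    (lam : ℕ → ℕ)
    (hlam : ∀ x, 1 ≤ x → x ≤ k → Nat.gcd x k = 1 →
      1 ≤ lam x ∧ lam x ≤ k ∧ x * lam x ≡ 1 [MOD k]) :
    let E : Set ℕ := {x | 1 ≤ x ∧ x ≤ k ∧ Nat.gcd x k = 1}
    let U : Set ℕ := {x ∈ E | (x : ℝ) < Real.sqrt k ∨ (k : ℝ) - Real.sqrt k < (x : ℝ)}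
    (U ∪ (lam '' U)).ncard = 4 * Nat.totient m - 2 := by
  intro E U
  have hm : 3 ≤ m := by nlinarith [hsq ▸ hk]
  have hkm : m ≤ k := by rw [hsq]; nlinarith
  have h2m : 2 * m ≤ k := by rw [hsq]; nlinarith
  have hsqrt : Real.sqrt k = m := by
    rw [hsq]; push_cast
    exact Real.sqrt_sq (by positivity)
  have hUmem : ∀ x : ℕ, x ∈ U ↔ (1 ≤ x ∧ x ≤ k ∧ Nat.gcd x k = 1) ∧ (x < m ∨ k - m < x) := by
    intro x
    simp only [U, E, Set.mem_setOf_eq, Set.mem_sep_iff, hsqrt]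
    constructor
    · rintro ⟨hE, h | h⟩
      · exact ⟨hE, Or.inl (by exact_mod_cast h)⟩
      · refine ⟨hE, Or.inr ?_⟩
        have h1 : (k : ℝ) < x + m := by linarith
        have h2 : k < x + m := by exact_mod_cast h1
        omega
    · rintro ⟨hE, h | h⟩
      · exact ⟨hE, Or.inl (by exact_mod_cast h)⟩
      · refine ⟨hE, Or.inr ?_⟩
        have h1 : k < x + m := by omega
        have h2 : (k : ℝ) < x + m := by exact_mod_cast h1
        linarith
  have hE1 : ∀ x ∈ U, 1 ≤ x ∧ x ≤ k ∧ Nat.gcd x k = 1 := fun x hx => ((hUmem x).mp hx).1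
  have hlamE : ∀ x, 1 ≤ x → x ≤ k → Nat.gcd x k = 1 → Nat.gcd (lam x) k = 1 := by
    intro x h1 h2 h3
    obtain ⟨l1, l2, l3⟩ := hlam x h1 h2 h3
    have hpos : 1 ≤ x * lam x := Nat.one_le_iff_ne_zero.mpr (Nat.mul_ne_zero (by omega) (by omega))
    obtain ⟨t, ht⟩ := (Nat.modEq_iff_dvd' hpos).mp l3.symm
    have hd1 : Nat.gcd (lam x) k ∣ x * lam x - 1 :=
      ht ▸ dvd_mul_of_dvd_left (Nat.gcd_dvd_right _ _) t
    have hd2 : Nat.gcd (lam x) k ∣ x * lam x :=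
      dvd_mul_of_dvd_right (Nat.gcd_dvd_left _ _) x
    have hone : Nat.gcd (lam x) k ∣ 1 := by
      have := Nat.dvd_sub hd2 hd1
      simpa [Nat.sub_sub_self hpos] using this
    exact Nat.eq_one_of_dvd_one hone
  have hinv : ∀ x, 1 ≤ x → x ≤ k → Nat.gcd x k = 1 → lam (lam x) = x := by
    intro x h1 h2 h3
    obtain ⟨l1, l2, l3⟩ := hlam x h1 h2 h3
    obtain ⟨p1, p2, p3⟩ := hlam (lam x) l1 l2 (hlamE x h1 h2 h3)
    have : lam (lam x) ≡ x [MOD k] := cux_inv_unique p3 (by rwa [mul_comm] at l3)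
    exact cux_rep_unique p1 p2 h1 h2 this
  have hinj : Set.InjOn lam U := by
    intro a ha b hb hab
    obtain ⟨a1, a2, a3⟩ := hE1 a ha
    obtain ⟨b1, b2, b3⟩ := hE1 b hb
    rw [← hinv a a1 a2 a3, ← hinv b b1 b2 b3, hab]
  -- Finset description
  set A : Finset ℕ := (Finset.Ico 1 m).filter (fun x => Nat.gcd x k = 1) with hA
  set B : Finset ℕ := A.image (fun j => k - j) with hB
  have hgcd_sub : ∀ j, j ≤ k → Nat.gcd (k - j) k = Nat.gcd j k := by
    intro j hj
    exact Nat.gcd_self_sub_left hj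
  have hAmem : ∀ x, x ∈ A ↔ 1 ≤ x ∧ x < m ∧ Nat.gcd x k = 1 := by
    intro x; simp [hA, Finset.mem_filter, Finset.mem_Ico]; tauto
  have hBmem : ∀ x, x ∈ B ↔ (k - m < x ∧ x ≤ k - 1 ∧ Nat.gcd x k = 1) := by
    intro x
    simp only [hB, Finset.mem_image]
    constructor
    · rintro ⟨j, hj, rfl⟩
      rw [hAmem] at hj
      refine ⟨by omega, by omega, ?_⟩
      rw [hgcd_sub j (by omega)]; exact hj.2.2
    · rintro ⟨h1, h2, h3⟩
      refine ⟨k - x, ?_, by omega⟩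
      rw [hAmem]
      refine ⟨by omega, by omega, ?_⟩
      rw [← hgcd_sub (k - x) (by omega)]
      have : k - (k - x) = x := by omega
      rw [this]; exact h3
  have hUF : U = ↑(A ∪ B) := by
    ext x
    rw [hUmem, Finset.coe_union, Set.mem_union, Finset.mem_coe, Finset.mem_coe, hAmem, hBmem]
    constructor
    · rintro ⟨⟨h1, h2, h3⟩, h4 | h4⟩
      · exact Or.inl ⟨h1, h4, h3⟩
      · refine Or.inr ⟨h4, ?_, h3⟩
        have : x ≠ k := by rintro rfl; simp [Nat.gcd_self] at h3; omega
        omega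
    · rintro (⟨h1, h2, h3⟩ | ⟨h1, h2, h3⟩)
      · exact ⟨⟨h1, by omega, h3⟩, Or.inl h2⟩
      · exact ⟨⟨by omega, by omega, h3⟩, Or.inr h1⟩
  -- cardinalities
  have hcardA : A.card = Nat.totient m := by
    have : A = (Finset.range m).filter m.Coprime := by
      ext x
      rw [hAmem, Finset.mem_filter, Finset.mem_range]
      constructor
      · rintro ⟨h1, h2, h3⟩
        refine ⟨h2, ?_⟩
        have : Nat.Coprime x m := by
          have := h3; rw [hsq] at this
          exact (Nat.coprime_pow_right_iff (by norm_num) ..).mp this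
        exact (Nat.coprime_comm.mp this)
      · rintro ⟨h1, h2⟩
        have hx1 : 1 ≤ x := by
          rcases Nat.eq_zero_or_pos x with rfl | h
          · simp [Nat.Coprime] at h2; omega
          · omega
        refine ⟨hx1, h1, ?_⟩
        rw [hsq]
        exact (Nat.coprime_pow_right_iff (by norm_num) ..).mpr (Nat.coprime_comm.mp h2)
    rw [this, Nat.totient]
  have hcardB : B.card = A.card := by
    rw [hB]
    apply Finset.card_image_of_injOn
    intro a ha b hb hab
    simp only [Finset.mem_coe] at ha hb
    rw [hAmem] at ha hb
    simp only at hab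
    omega
  have hdisj : Disjoint A B := by
    rw [Finset.disjoint_left]
    intro a ha hb
    rw [hAmem] at ha
    rw [hBmem] at hb
    omega
  have hcardU : U.ncard = 2 * Nat.totient m := by
    rw [hUF, Set.ncard_coe_finset, Finset.card_union_of_disjoint hdisj, hcardA, hcardB, hcardA]
    ring
  have hUfin : U.Finite := by rw [hUF]; exact (A ∪ B).finite_toSet
  have hLfin : (lam '' U).Finite := hUfin.image lam
  have hcardL : (lam '' U).ncard = 2 * Nat.totient m := by
    rw [Set.ncard_image_of_injOn hinj, hcardU]
  -- intersection
  have hk1 : Nat.gcd (k - 1) k = 1 := by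
    have h1 : k - 1 + 1 = k := by omega
    have := Nat.coprime_self_add_right (m := k - 1) (n := 1)
    rw [h1] at this
    simpa [Nat.Coprime, Nat.gcd_comm] using this.mpr (by simp [Nat.Coprime])
  have hlam1 : lam 1 = 1 := by
    obtain ⟨l1, l2, l3⟩ := hlam 1 le_rfl (by omega) (Nat.gcd_one_left k)
    rw [one_mul] at l3
    exact cux_rep_unique l1 l2 le_rfl (by omega) l3
  have hlamk1 : lam (k - 1) = k - 1 := by
    obtain ⟨l1, l2, l3⟩ := hlam (k - 1) (by omega) (by omega) hk1
    have hsq1 : (k - 1) * (k - 1) ≡ 1 [MOD k] := by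
      have heq : (k - 1) * (k - 1) = k * (k - 2) + 1 := by
        obtain ⟨j, rfl⟩ : ∃ j, k = j + 9 := ⟨k - 9, by omega⟩
        show (j + 8) * (j + 8) = (j + 9) * (j + 7) + 1
        ring
      rw [heq]
      exact (Nat.modEq_iff_dvd' (by omega)).mpr ⟨k - 2, by omega⟩ |>.symm
    have : lam (k - 1) ≡ k - 1 [MOD k] := cux_inv_unique l3 hsq1
    exact cux_rep_unique l1 l2 (by omega) (by omega) this
  have h1U : (1 : ℕ) ∈ U := (hUmem 1).mpr ⟨⟨le_rfl, by omega, Nat.gcd_one_left k⟩, Or.inl (by omega)⟩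
  have hk1U : (k - 1) ∈ U := (hUmem (k - 1)).mpr ⟨⟨by omega, by omega, hk1⟩, Or.inr (by omega)⟩
  have hInter : U ∩ (lam '' U) = {1, k - 1} := by
    ext x
    simp only [Set.mem_inter_iff, Set.mem_insert_iff, Set.mem_singleton_iff]
    constructor
    · rintro ⟨hxU, u, huU, rfl⟩
      obtain ⟨u1, u2, u3⟩ := hE1 u huU
      have hlu : lam (lam u) = u := hinv u u1 u2 u3
      obtain ⟨x1, x2, x3⟩ := hE1 (lam u) hxU
      -- lam (lam u) = u ∈ U
      have hmod : lam u * lam (lam u) ≡ 1 [MOD k] := by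
        obtain ⟨_, _, p3⟩ := hlam (lam u) x1 x2 x3
        exact p3
      rw [hlu] at hmod
      have hxpos := ((hUmem (lam u)).mp hxU).2
      have hupos := ((hUmem u).mp huU).2
      rw [hsq] at hmod hxpos hupos x2 u2 ⊢
      rcases hxpos with hs | hl
      · rcases hupos with hs' | hl'
        · exact Or.inl (cux_case_small hm hs hs' hmod).1
        · exact absurd (cux_case_mixed hm x1 hs hl' u2 hmod) id
      · rcases hupos with hs' | hl'
        · exact absurd (cux_case_mixed hm u1 hs' hl x2 (mul_comm (lam u) u ▸ hmod)) id
        · exact Or.inr (cux_case_large hm hl x2 hl' u2 hmod).1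
    · rintro (rfl | rfl)
      · exact ⟨h1U, 1, h1U, hlam1⟩
      · exact ⟨hk1U, k - 1, hk1U, hlamk1⟩
  have hInterCard : (U ∩ (lam '' U)).ncard = 2 := by
    rw [hInter]
    rw [Set.ncard_pair (by omega : (1 : ℕ) ≠ k - 1)]
  have hmain := Set.ncard_union_add_ncard_inter U (lam '' U) hUfin hLfin
  rw [hcardU, hcardL, hInterCard] at hmain
  have htot : 1 ≤ Nat.totient m := Nat.totient_pos.mpr (by omega)
  omega
end

section
/- Let k ≥ 9 be a perfect square with E_k, U_k, λ as above. Then |U_k| = 2·φ(√k), where φ is Euler's totient function. -/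
theorem card_U (k m : ℕ) (hk : 9 ≤ k) (hsq : k = m ^ 2) :
    let E : Set ℕ := {x | 1 ≤ x ∧ x ≤ k ∧ Nat.gcd x k = 1}
    let U : Set ℕ := {x ∈ E | (x : ℝ) < Real.sqrt k ∨ (k : ℝ) - Real.sqrt k < (x : ℝ)}
    U.ncard = 2 * Nat.totient m := by
  intro E U
  have hm3 : 3 ≤ m := by nlinarith
  have hmk : 2 * m ≤ k := by nlinarith
  have hsqrt : Real.sqrt k = m := by
    rw [hsq]; push_cast; exact Real.sqrt_sq (by positivity)
  -- coprimality with k is coprimality with m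
  have hco : ∀ x : ℕ, Nat.gcd x k = 1 ↔ Nat.Coprime x m := by
    intro x
    rw [hsq, show Nat.gcd x (m ^ 2) = 1 ↔ Nat.Coprime x (m ^ 2) from Iff.rfl,
      Nat.coprime_pow_right_iff (by norm_num)]
  set A : Finset ℕ := (Finset.Ioc 0 k).filter (fun x => Nat.gcd x k = 1 ∧ x < m) with hA
  set B : Finset ℕ := (Finset.Ioc 0 k).filter (fun x => Nat.gcd x k = 1 ∧ k - m < x) with hB
  have hU : U = ↑(A ∪ B) := by
    ext x
    simp only [U, E, Set.mem_setOf_eq, Finset.coe_union, Set.mem_union, hA, hB,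
      Finset.coe_filter, Finset.mem_Ioc, hsqrt]
    have h1 : (x : ℝ) < (m : ℝ) ↔ x < m := by exact_mod_cast Nat.cast_lt
    have h2 : (k : ℝ) - (m : ℝ) < (x : ℝ) ↔ k - m < x := by
      rw [← Nat.cast_sub (by omega)]; exact_mod_cast Nat.cast_lt
    rw [h1, h2]
    constructor
    · rintro ⟨⟨hx1, hx2, hx3⟩, h | h⟩
      · exact Or.inl ⟨⟨by omega, hx2⟩, hx3, h⟩
      · exact Or.inr ⟨⟨by omega, hx2⟩, hx3, h⟩
    · rintro (⟨⟨h1', h2'⟩, h3, h4⟩ | ⟨⟨h1', h2'⟩, h3, h4⟩) <;>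
        exact ⟨⟨by omega, h2', h3⟩, by omega⟩
  rw [hU, Set.ncard_coe_finset]
  have hdisj : Disjoint A B := by
    rw [Finset.disjoint_left]
    rintro x hx hx'
    simp only [hA, hB, Finset.mem_filter, Finset.mem_Ioc] at hx hx'
    omega
  have hAcard : A.card = Nat.totient m := by
    rw [Nat.totient_eq_card_coprime]
    congr 1
    ext x
    simp only [hA, Finset.mem_filter, Finset.mem_Ioc, Finset.mem_range, hco]
    constructor
    · rintro ⟨⟨h1, h2⟩, h3, h4⟩
      exact ⟨h4, (Nat.coprime_comm.mp h3)⟩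
    · rintro ⟨h1, h2⟩
      have hx0 : 0 < x := by
        rcases Nat.eq_zero_or_pos x with rfl | h
        · simp [Nat.coprime_zero_right] at h2; omega
        · exact h
      exact ⟨⟨hx0, by omega⟩, Nat.coprime_comm.mp h2, h1⟩
  have hBcard : B.card = A.card := by
    apply Finset.card_bij (fun x _ => k - x)
    · intro x hx
      simp only [hB, Finset.mem_filter, Finset.mem_Ioc] at hx
      obtain ⟨⟨hx0, hxk⟩, hg, hlt⟩ := hx
      have hxk' : x < k := by
        rcases eq_or_lt_of_le hxk with rfl | h
        · rw [Nat.gcd_self] at hg; omega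
        · exact h
      have hg' : Nat.gcd (k - x) k = 1 := by
        rw [show Nat.gcd (k - x) k = 1 ↔ Nat.Coprime (k - x) k from Iff.rfl,
          Nat.coprime_self_sub_left hxk]
        exact hg
      simp only [hA, Finset.mem_filter, Finset.mem_Ioc]
      exact ⟨⟨by omega, by omega⟩, hg', by omega⟩
    · intro x hx y hy h
      simp only [hB, Finset.mem_filter, Finset.mem_Ioc] at hx hy
      omega
    · intro y hy
      simp only [hA, Finset.mem_filter, Finset.mem_Ioc] at hy
      obtain ⟨⟨hy0, hyk⟩, hg, hlt⟩ := hy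
      refine ⟨k - y, ?_, by omega⟩
      have hg' : Nat.gcd (k - y) k = 1 := by
        rw [show Nat.gcd (k - y) k = 1 ↔ Nat.Coprime (k - y) k from Iff.rfl,
          Nat.coprime_self_sub_left hyk]
        exact hg
      simp only [hB, Finset.mem_filter, Finset.mem_Ioc]
      exact ⟨⟨by omega, by omega⟩, hg', by omega⟩
  rw [Finset.card_union_of_disjoint hdisj, hAcard, hBcard, hAcard]
  ring
end
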